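/- arXiv:1209.5669 — 3 statements merged into one kernel-verified Lean document; each statement's English description precedes it below -/
import Mathlib

section
/- Every analytic subset of a Polish space is either countable or has cardinality 2^{ℵ₀}. -/
open MeasureTheory Cardinal

/-!
Write `A = range f` with `f : (ℕ → ℕ) → Y` continuous and call a set `S ⊆ ℕ → ℕ` large when
`f '' S` is uncountable. By the Lindelöf property a large set contains points all of whose
neighbourhoods are large, and two such points with distinct images; separating these images
by neighbourhoods with disjoint closures splits a large closed set into two small large closed
subsets with disjoint images. Iterating the splitting gives a Cantor scheme of vanishing
diameter, and `f` composed with its induced map injects `ℕ → Bool` into `A`.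
-/

open Set Function Topology Metric CantorScheme
open scoped ENNReal

section Condensation

variable {X Y : Type*} [TopologicalSpace X] [HereditarilyLindelofSpace X] {f : X → Y} {S : Set X}

theorem exists_mem_forall_nhds_not_countable_image
    (hS : ¬(f '' S).Countable) : ∃ x ∈ S, ∀ U ∈ 𝓝 x, ¬(f '' (S ∩ U)).Countable := by
  by_contra! h
  choose U hU hUc using h
  obtain ⟨t, ht, hcover⟩ := (HereditarilyLindelofSpace.isLindelof S).elim_nhds_subcover' U hU
  refine hS ((ht.biUnion fun x _ => hUc x x.2).mono ?_)
  rintro _ ⟨y, hy, rfl⟩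
  obtain ⟨x, hx, hyx⟩ := mem_iUnion₂.1 (hcover hy)
  exact mem_iUnion₂.2 ⟨x, hx, mem_image_of_mem f ⟨hy, hyx⟩⟩

theorem exists_pair_forall_nhds_not_countable_image (hS : ¬(f '' S).Countable) :
    ∃ x₀ ∈ S, ∃ x₁ ∈ S, f x₀ ≠ f x₁ ∧ (∀ U ∈ 𝓝 x₀, ¬(f '' (S ∩ U)).Countable) ∧
      ∀ U ∈ 𝓝 x₁, ¬(f '' (S ∩ U)).Countable := by
  obtain ⟨x₀, hx₀S, hx₀⟩ := exists_mem_forall_nhds_not_countable_image hS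
  have hS' : ¬(f '' (S \ f ⁻¹' {f x₀})).Countable := by
    rw [image_sdiff_preimage]
    exact fun h => hS ((h.insert (f x₀)).mono (subset_insert_sdiff_singleton _ _))
  obtain ⟨x₁, ⟨hx₁S, hx₁⟩, hx₁U⟩ := exists_mem_forall_nhds_not_countable_image hS'
  refine ⟨x₀, hx₀S, x₁, hx₁S, Ne.symm hx₁, hx₀, fun U hU h => hx₁U U hU (h.mono ?_)⟩
  exact image_mono (inter_subset_inter_left _ sdiff_subset)

end Condensation

section Splitting

variable {X Y : Type*} [PseudoEMetricSpace X] [TopologicalSpace Y] {f : X → Y} {S : Set X}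

theorem exists_isClosed_subset_not_countable_image_ediam_le (hf : Continuous f)
    (hS : IsClosed S) {x : X} (hx : ∀ U ∈ 𝓝 x, ¬(f '' (S ∩ U)).Countable) {V : Set Y}
    (hV : V ∈ 𝓝 (f x)) {ε : ℝ≥0∞} (hε : 0 < ε) :
    ∃ C ⊆ S, (IsClosed C ∧ ¬(f '' C).Countable) ∧ ediam C ≤ ε ∧ f '' C ⊆ closure V := by
  set U := f ⁻¹' V ∩ eball x (ε / 2)
  have hU : U ∈ 𝓝 x :=
    Filter.inter_mem (hf.continuousAt hV) (eball_mem_nhds x (ENNReal.half_pos hε.ne'))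
  refine ⟨closure (S ∩ U), closure_minimal inter_subset_left hS, ⟨isClosed_closure, ?_⟩, ?_, ?_⟩
  · exact fun h => hx U hU (h.mono (image_mono subset_closure))
  · calc ediam (closure (S ∩ U)) = ediam (S ∩ U) := ediam_closure _
      _ ≤ ediam (eball x (ε / 2)) := ediam_mono (inter_subset_right.trans inter_subset_right)
      _ ≤ 2 * (ε / 2) := ediam_eball_le
      _ = ε := ENNReal.mul_div_cancel two_ne_zero ENNReal.ofNat_ne_top
  · calc f '' closure (S ∩ U) ⊆ closure (f '' (S ∩ U)) := image_closure_subset_closure_image hf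
      _ ⊆ closure V := closure_mono ((image_mono inter_subset_right).trans
          ((image_mono inter_subset_left).trans (image_preimage_subset f V)))

theorem exists_splitting_of_not_countable_image [HereditarilyLindelofSpace X] [T25Space Y]
    (hf : Continuous f) (hS : IsClosed S) (hSc : ¬(f '' S).Countable) {ε : ℝ≥0∞}
    (hε : 0 < ε) :
    ∃ T : Bool → Set X, (∀ b, T b ⊆ S ∧ (IsClosed (T b) ∧ ¬(f '' T b).Countable) ∧
      ediam (T b) ≤ ε) ∧ Disjoint (f '' T false) (f '' T true) := by
  obtain ⟨x₀, -, x₁, -, hne, hx₀, hx₁⟩ := exists_pair_forall_nhds_not_countable_image hSc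
  obtain ⟨V₀, hV₀, V₁, hV₁, hV⟩ := exists_nhds_disjoint_closure hne
  obtain ⟨C₀, hC₀S, hC₀, hC₀ε, hC₀V⟩ :=
    exists_isClosed_subset_not_countable_image_ediam_le hf hS hx₀ hV₀ hε
  obtain ⟨C₁, hC₁S, hC₁, hC₁ε, hC₁V⟩ :=
    exists_isClosed_subset_not_countable_image_ediam_le hf hS hx₁ hV₁ hε
  refine ⟨fun b => cond b C₁ C₀, ?_, hV.mono hC₀V hC₁V⟩
  rintro (_ | _)
  exacts [⟨hC₀S, hC₀, hC₀ε⟩, ⟨hC₁S, hC₁, hC₁ε⟩]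

end Splitting

theorem CantorScheme.Disjoint.injective_of_forall_mem {β α : Type*} {A : List β → Set α}
    (hA : CantorScheme.Disjoint A) {g : (ℕ → β) → α} (hg : ∀ x n, g x ∈ A (PiNat.res x n)) :
    Injective g := by
  intro x y hxy
  apply PiNat.res_injective
  funext n
  induction n with
  | zero => rfl
  | succ n ih =>
    have hx := hg x (n + 1)
    have hy := hg y (n + 1)
    rw [PiNat.res_succ, ih] at hx
    rw [PiNat.res_succ] at hy
    rw [PiNat.res_succ, PiNat.res_succ, ih]
    congr 1
    by_contra hne
    exact (hA _ hne).ne_of_mem hx hy hxy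

theorem exists_injective_comp_of_splitting {X Y : Type*} [PseudoMetricSpace X] [CompleteSpace X]
    (f : X → Y) {P : Set X → Prop} (hP : ∀ S, P S → IsClosed S ∧ S.Nonempty)
    (hsplit : ∀ S, P S → ∀ ε : ℝ≥0∞, 0 < ε → ∃ T : Bool → Set X,
      (∀ b, T b ⊆ S ∧ P (T b) ∧ ediam (T b) ≤ ε) ∧ Disjoint (f '' T false) (f '' T true))
    {S : Set X} (hS : P S) : ∃ g : (ℕ → Bool) → X, Injective (f ∘ g) := by
  obtain ⟨u, -, hu_pos, hu⟩ := exists_seq_strictAnti_tendsto' (zero_lt_one' ℝ≥0∞)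
  choose T hT hTdisj using fun (S : {S // P S}) (n : ℕ) => hsplit S.1 S.2 (u n) (hu_pos n).1
  let DP : List Bool → {S // P S} := fun l =>
    List.rec ⟨S, hS⟩ (fun b l D => ⟨T D l.length b, (hT D l.length b).2.1⟩) l
  let D : List Bool → Set X := fun l => (DP l).1
  have hanti : ClosureAntitone D :=
    Antitone.closureAntitone (fun l b => (hT (DP l) l.length b).1) fun l => (hP _ (DP l).2).1
  have hdiam : VanishingDiam D := by
    intro x
    rw [← Filter.tendsto_add_atTop_iff_nat 1]
    refine tendsto_of_tendsto_of_tendsto_of_le_of_le tendsto_const_nhds hu (fun _ => zero_le)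
      fun n => ?_
    rw [PiNat.res_succ]
    calc ediam (D (x n :: PiNat.res x n)) ≤ u (PiNat.res x n).length := (hT _ _ (x n)).2.2
      _ = u n := by rw [PiNat.res_length]
  have hdom : (inducedMap D).1 = Set.univ :=
    hanti.map_of_vanishingDiam hdiam fun l => (hP _ (DP l).2).2
  have himage : CantorScheme.Disjoint fun l => f '' D l := by
    rintro l (_ | _) (_ | _) hne
    exacts [absurd rfl hne, hTdisj _ _, (hTdisj _ _).symm, absurd rfl hne]
  refine ⟨fun x => (inducedMap D).2 ⟨x, hdom ▸ mem_univ x⟩, himage.injective_of_forall_mem ?_⟩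
  exact fun x n => mem_image_of_mem f (map_mem _ n)

/-- Every analytic subset of a Polish space is either countable or has cardinality `2^ℵ₀`. -/
theorem analytic_countable_or_continuum
    {Y : Type*} [TopologicalSpace Y] [PolishSpace Y]
    (A : Set Y) (hA : AnalyticSet A) :
    A.Countable ∨ Cardinal.mk ↥A = 2 ^ Cardinal.aleph0 := by
  refine or_iff_not_imp_left.2 fun hAc => ?_
  rw [AnalyticSet] at hA
  obtain ⟨f, hf, rfl⟩ := hA.resolve_left fun h => hAc (h ▸ countable_empty)
  let := TopologicalSpace.upgradeIsCompletelyMetrizable (ℕ → ℕ)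
  obtain ⟨g, hg⟩ := exists_injective_comp_of_splitting f
    (P := fun S => IsClosed S ∧ ¬(f '' S).Countable)
    (fun S hS => ⟨hS.1, nonempty_iff_ne_empty.2 fun h => hS.2 (by simp [h])⟩)
    (fun S hS ε hε => exists_splitting_of_not_countable_image hf hS.1 hS.2 hε)
    ⟨isClosed_univ, by rwa [image_univ]⟩
  refine le_antisymm ?_ ?_
  · simpa using mk_range_le_lift (f := f)
  · simpa using lift_mk_le_lift_mk_of_injective
      ((injective_codRestrict fun x => mem_range_self (g x)).2 hg)
end

section
/- If a Büchi transition system T with countable state set is unambiguous (every σ ∈ Σ^ω has at most one accepting run), then the ω-language L(T) is a Borel subset of Σ^ω. -/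
open MeasureTheory

/-- A nondeterministic Büchi transition system over input alphabet `S` with state set `Q`. -/
structure BuchiTS (S Q : Type*) where
  /-- the transition relation -/
  delta : Set (Q × S × Q)
  /-- the initial state -/
  init : Q
  /-- the set of final (accepting) states -/
  final : Set Q

/-- `ρ` is a run of `T` on the infinite word `σ`. -/
def BuchiTS.IsRun {S Q : Type*} (T : BuchiTS S Q) (σ : ℕ → S) (ρ : ℕ → Q) : Prop :=
  ρ 0 = T.init ∧ ∀ i : ℕ, (ρ i, σ i, ρ (i + 1)) ∈ T.delta

/-- `ρ` is an accepting run of `T` on `σ`. -/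
def BuchiTS.IsAcceptingRun {S Q : Type*} (T : BuchiTS S Q) (σ : ℕ → S) (ρ : ℕ → Q) : Prop :=
  T.IsRun σ ρ ∧ ∀ n : ℕ, ∃ i ≥ n, ρ i ∈ T.final

/-!
The pairs `(σ, ρ)` with `ρ` an accepting run on `σ` form a `G_δ`, hence Borel, subset of the
Polish space `Σ^ω × Q^ω`: the run condition is a countable intersection of clopen conditions on
finitely many coordinates, and the Büchi condition is `⋂ n, ⋃ i ≥ n, {ρ i ∈ F}`. The language is
the projection of this set to `Σ^ω`; unambiguity makes the projection injective on it, so by the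
Lusin–Souslin theorem the language is Borel.
-/

namespace BuchiTS

variable {S Q : Type*} [TopologicalSpace S] [DiscreteTopology S]
  [TopologicalSpace Q] [DiscreteTopology Q]

theorem isGδ_setOf_isAcceptingRun (T : BuchiTS S Q) :
    IsGδ {p : (ℕ → S) × (ℕ → Q) | T.IsAcceptingRun p.1 p.2} := by
  have hEq : {p : (ℕ → S) × (ℕ → Q) | T.IsAcceptingRun p.1 p.2} =
      ({p | p.2 0 = T.init} ∩ ⋂ i, {p | (p.2 i, p.1 i, p.2 (i + 1)) ∈ T.delta}) ∩
        ⋂ n, ⋃ i ≥ n, {p | p.2 i ∈ T.final} := by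
    ext p
    simp only [IsAcceptingRun, IsRun, Set.mem_ofPred_eq, Set.mem_inter_iff, Set.mem_iInter,
      Set.mem_iUnion, exists_prop]
  rw [hEq]
  refine ((IsOpen.isGδ ?_).inter (.iInter fun i => IsOpen.isGδ ?_)).inter
    (.iInter fun n => IsOpen.isGδ ?_)
  · exact (isOpen_discrete {T.init}).preimage (by fun_prop)
  · exact (isOpen_discrete T.delta).preimage (by fun_prop)
  · exact isOpen_biUnion fun i _ => (isOpen_discrete T.final).preimage (by fun_prop)

end BuchiTS

/-- If a Büchi transition system with countable state set is unambiguous (every `σ` has at most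
one accepting run), then the ω-language it accepts is a Borel subset of `Σ^ω`. -/
theorem language_of_unambiguous_buchiTS_borel
    {S Q : Type*} [Fintype S] [Countable Q]
    [TopologicalSpace S] [DiscreteTopology S] [TopologicalSpace Q] [DiscreteTopology Q]
    [MeasurableSpace (ℕ → S)] [BorelSpace (ℕ → S)]
    (T : BuchiTS S Q)
    (hunamb : ∀ (σ : ℕ → S) (ρ ρ' : ℕ → Q),
      T.IsAcceptingRun σ ρ → T.IsAcceptingRun σ ρ' → ρ = ρ') :
    MeasurableSet {σ : ℕ → S | ∃ ρ : ℕ → Q, T.IsAcceptingRun σ ρ} := by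
  let : MeasurableSpace (ℕ → Q) := borel _
  have : BorelSpace (ℕ → Q) := ⟨rfl⟩
  have : PolishSpace S := inferInstance
  have : PolishSpace Q := inferInstance
  set R := {p : (ℕ → S) × (ℕ → Q) | T.IsAcceptingRun p.1 p.2}
  have hinj : Set.InjOn Prod.fst R := fun p hp q hq h => Prod.ext h (hunamb _ _ _ hp (h ▸ hq))
  have himage : {σ : ℕ → S | ∃ ρ : ℕ → Q, T.IsAcceptingRun σ ρ} = Prod.fst '' R := by
    ext σ
    simp [R]
  rw [himage]
  exact T.isGδ_setOf_isAcceptingRun.measurableSet.image_of_continuousOn_injOn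
    continuous_fst.continuousOn hinj
end

section
/- Let Y be a Polish space and A ⊆ Y an uncountable analytic set. Then A contains a subset homeomorphic to the Cantor space {0,1}^ω; in particular A has cardinality 2^{ℵ₀}. -/
open MeasureTheory Cardinal

/-!
Write `A = f(ℕ^ℕ)` with `f` continuous. Call `x` a condensation point of `f` if `f` maps every
neighbourhood of `x` onto an uncountable set. By second countability the remaining points have
countable image, so every open set with uncountable image contains two condensation points with
distinct values, and small neighbourhoods of them are two open pieces of small diameter whose
images are uncountable and disjoint. Iterating this splitting in a complete metric for `ℕ^ℕ`
gives a Cantor scheme with vanishing diameters; the induced map `φ` from the Cantor space is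
continuous, and `f ∘ φ` is injective since sibling pieces have disjoint images. A continuous
injection of the compact Cantor space into a Hausdorff space is an embedding, and `ℕ^ℕ` has
cardinality `2^ℵ₀`.
-/

open Set Filter Function Topology TopologicalSpace
open scoped ENNReal

theorem CantorScheme.Disjoint.eq_of_mem_res {α β : Type*} {A : List β → Set α}
    (hA : CantorScheme.Disjoint A) {x y : ℕ → β} {a : α}
    (hx : ∀ n, a ∈ A (PiNat.res x n)) (hy : ∀ n, a ∈ A (PiNat.res y n)) : x = y := by
  by_contra hne
  set n := PiNat.firstDiff x y
  have hres : PiNat.res x n = PiNat.res y n :=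
    PiNat.res_eq_res.2 fun _ hm => PiNat.apply_eq_of_lt_firstDiff hm
  have hxn := hx (n + 1)
  have hyn := hy (n + 1)
  rw [PiNat.res_succ, hres] at hxn
  rw [PiNat.res_succ] at hyn
  exact (hA _ (PiNat.apply_firstDiff_ne hne)).ne_of_mem hxn hyn rfl

theorem exists_isOpen_mem_closure_subset_ediam_le {X : Type*} [PseudoEMetricSpace X] {x : X}
    {s : Set X} (hs : s ∈ 𝓝 x) {ε : ℝ≥0∞} (hε : 0 < ε) :
    ∃ t, IsOpen t ∧ x ∈ t ∧ closure t ⊆ s ∧ Metric.ediam t ≤ ε := by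
  obtain ⟨ρ, hρ, hρs⟩ := Metric.nhds_basis_closedEBall.mem_iff.1 hs
  set r := min ρ (ε / 2)
  have hr : 0 < r := lt_min hρ (ENNReal.half_pos hε.ne')
  refine ⟨Metric.eball x r, Metric.isOpen_eball, Metric.mem_eball_self hr, ?_, ?_⟩
  · refine (closure_minimal Metric.eball_subset_closedEBall Metric.isClosed_closedEBall).trans ?_
    exact (Metric.closedEBall_subset_closedEBall (min_le_left _ _)).trans hρs
  · calc Metric.ediam (Metric.eball x r) ≤ 2 * r := Metric.ediam_eball_le
      _ ≤ 2 * (ε / 2) := by gcongr; exact min_le_right _ _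
      _ = ε := ENNReal.mul_div_cancel two_ne_zero ENNReal.ofNat_ne_top

section Condensation

variable {X Y : Type*} [TopologicalSpace X]

def imageCondensationPoints (f : X → Y) : Set X :=
  {x | ∀ U ∈ 𝓝 x, ¬(f '' U).Countable}

theorem countable_image_compl_imageCondensationPoints [SecondCountableTopology X] (f : X → Y) :
    (f '' (imageCondensationPoints f)ᶜ).Countable := by
  have hloc : ∀ x ∉ imageCondensationPoints f, ∃ U ∈ 𝓝 x, (f '' U).Countable := by
    simp [imageCondensationPoints]
  choose! U hU hUc using hloc
  obtain ⟨t, ht, htc, hcover⟩ :=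
    countable_cover_nhdsWithin fun x hx => mem_nhdsWithin_of_mem_nhds (hU x hx)
  refine (htc.biUnion fun x hx => hUc x (ht hx)).mono ?_
  rw [← image_iUnion₂]
  exact image_mono hcover

theorem not_countable_image_inter_imageCondensationPoints [SecondCountableTopology X] {f : X → Y}
    {s : Set X} (hs : ¬(f '' s).Countable) :
    ¬(f '' (s ∩ imageCondensationPoints f)).Countable := fun h =>
  hs <| (h.union (countable_image_compl_imageCondensationPoints f)).mono <| by
    rw [← image_union]
    exact image_mono fun x hx => (em _).imp (fun h => ⟨hx, h⟩) id

end Condensation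

theorem exists_split_of_not_countable_image {X Y : Type*} [PseudoEMetricSpace X]
    [SecondCountableTopology X] [TopologicalSpace Y] [T2Space Y] {f : X → Y} (hf : Continuous f)
    {s : Set X} (hs : IsOpen s) (hunc : ¬(f '' s).Countable) {ε : ℝ≥0∞} (hε : 0 < ε) :
    ∃ t : Bool → Set X, (∀ b, IsOpen (t b) ∧ ¬(f '' t b).Countable ∧ closure (t b) ⊆ s ∧
      Metric.ediam (t b) ≤ ε) ∧ Pairwise (Disjoint on fun b => f '' t b) := by
  obtain ⟨_, ⟨x₀, ⟨hx₀s, hx₀⟩, rfl⟩, _, ⟨x₁, ⟨hx₁s, hx₁⟩, rfl⟩, hne⟩ :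
      (f '' (s ∩ imageCondensationPoints f)).Nontrivial := by
    by_contra h
    exact not_countable_image_inter_imageCondensationPoints hunc
      (not_nontrivial_iff.1 h).countable
  obtain ⟨V₀, V₁, hV₀, hV₁, hxV₀, hxV₁, hV⟩ := t2_separation hne
  have piece : ∀ {x V}, x ∈ s → x ∈ imageCondensationPoints f → IsOpen V → f x ∈ V →
      ∃ t, IsOpen t ∧ ¬(f '' t).Countable ∧ closure t ⊆ s ∧ Metric.ediam t ≤ ε ∧ f '' t ⊆ V := by
    intro x V hxs hx hV hxV
    obtain ⟨t, ht, hxt, hts, htε⟩ := exists_isOpen_mem_closure_subset_ediam_le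
      (inter_mem (hs.mem_nhds hxs) (hf.continuousAt.preimage_mem_nhds (hV.mem_nhds hxV))) hε
    exact ⟨t, ht, hx t (ht.mem_nhds hxt), hts.trans inter_subset_left, htε,
      image_subset_iff.2 (subset_closure.trans (hts.trans inter_subset_right))⟩
  obtain ⟨t₀, ht₀, ht₀u, ht₀s, ht₀ε, ht₀V⟩ := piece hx₀s hx₀ hV₀ hxV₀
  obtain ⟨t₁, ht₁, ht₁u, ht₁s, ht₁ε, ht₁V⟩ := piece hx₁s hx₁ hV₁ hxV₁
  refine ⟨fun b => bif b then t₁ else t₀, Bool.forall_bool.2 ⟨⟨ht₀, ht₀u, ht₀s, ht₀ε⟩,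
    ⟨ht₁, ht₁u, ht₁s, ht₁ε⟩⟩, ?_⟩
  rintro (_ | _) (_ | _) hb
  exacts [absurd rfl hb, hV.mono ht₀V ht₁V, (hV.mono ht₀V ht₁V).symm, absurd rfl hb]

open CantorScheme PiNat in
theorem Continuous.exists_nat_bool_injection_comp_of_not_countable_range {X Y : Type*}
    [TopologicalSpace X] [PolishSpace X] [TopologicalSpace Y] [T2Space Y] {f : X → Y}
    (hf : Continuous f) (hunc : ¬(range f).Countable) :
    ∃ φ : (ℕ → Bool) → X, Continuous φ ∧ Injective (f ∘ φ) := by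
  let := upgradeIsCompletelyMetrizable X
  choose! t ht hdisj using fun (s : Set X) (hs : IsOpen s ∧ ¬(f '' s).Countable) (n : ℕ) =>
    exists_split_of_not_countable_image hf hs.1 hs.2
      (ENNReal.inv_pos.2 (ENNReal.natCast_ne_top (n + 1)))
  let D : List Bool → Set X := fun l => l.rec Set.univ fun b l E => t E l.length b
  -- at the root the bound is `(0 : ℝ≥0∞)⁻¹ = ⊤`
  have hD : ∀ l, (IsOpen (D l) ∧ ¬(f '' D l).Countable) ∧
      Metric.ediam (D l) ≤ (l.length : ℝ≥0∞)⁻¹ := by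
    intro l
    induction l with
    | nil => simpa [D] using hunc
    | cons b l ih =>
      obtain ⟨hopen, hcount, -, hdiam⟩ := ht (D l) ih.1 l.length b
      exact ⟨⟨hopen, hcount⟩, by simpa using hdiam⟩
  have hanti : ClosureAntitone D := fun l b => (ht (D l) (hD l).1 l.length b).2.2.1
  have hdiam : VanishingDiam D := fun x =>
    tendsto_of_tendsto_of_tendsto_of_le_of_le tendsto_const_nhds ENNReal.tendsto_inv_nat_nhds_zero
      (fun _ => zero_le) fun n => by simpa using (hD (res x n)).2
  have himage : CantorScheme.Disjoint fun l => f '' D l := fun l => hdisj (D l) (hD l).1 l.length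
  have hdom : (inducedMap D).1 = Set.univ := hanti.map_of_vanishingDiam hdiam fun l =>
    nonempty_iff_ne_empty.2 fun h => (hD l).1.2 (by simp [h])
  let φ x := (inducedMap D).2 ⟨x, hdom ▸ Set.mem_univ x⟩
  have hmem x n : f (φ x) ∈ f '' D (res x n) := mem_image_of_mem f (map_mem _ n)
  refine ⟨φ, hdiam.map_continuous.comp (by fun_prop), fun x y (hxy : f (φ x) = f (φ y)) => ?_⟩
  exact himage.eq_of_mem_res (hmem x) (hxy ▸ hmem y)

/-- Perfect set theorem for analytic sets: an uncountable analytic subset `A` of a Polish space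
contains a subset homeomorphic to the Cantor space `{0,1}^ω`; in particular `A` has
cardinality `2^ℵ₀`. -/
theorem uncountable_analytic_contains_cantor
    {Y : Type*} [TopologicalSpace Y] [PolishSpace Y]
    (A : Set Y) (hA : AnalyticSet A) (hunc : ¬ A.Countable) :
    (∃ C : Set Y, C ⊆ A ∧ Nonempty ((ℕ → Bool) ≃ₜ ↥C)) ∧
      Cardinal.mk ↥A = 2 ^ Cardinal.aleph0 := by
  rw [AnalyticSet] at hA
  rcases hA with rfl | ⟨f, hf, rfl⟩
  · exact absurd countable_empty hunc
  obtain ⟨φ, hφ, hinj⟩ := hf.exists_nat_bool_injection_comp_of_not_countable_range hunc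
  have hsub : range (f ∘ φ) ⊆ range f := range_comp_subset_range φ f
  refine ⟨⟨_, hsub, ⟨((hf.comp hφ).isClosedEmbedding hinj).isEmbedding.toHomeomorph⟩⟩, ?_⟩
  rw [two_power_aleph0]
  refine le_antisymm (by simpa using mk_range_le_lift (f := f)) ?_
  calc 𝔠 = #(range (f ∘ φ)) := by simpa using (mk_range_eq_of_injective hinj).symm
    _ ≤ #(range f) := mk_le_mk_of_subset hsub
end
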